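/- arXiv:2410.00791 — 2 statements merged into one kernel-verified Lean document; each statement's English description precedes it below -/
import Mathlib

section
/- Let Ψ : L²(𝕋ⁿ) → L²(𝕋ⁿ) be the unitary operator (Ψf)(ζ) = J(ζ)·f(τ(ζ)), where τ(ζ) = (ζ₁ζ₂⋯ζₙ, ζ₂ζ₃⋯ζₙ, …, ζ_{n−1}ζₙ, ζₙ) and J(ζ) = ∏_{j=2}^{n} ζ_j^{j−1}, and let σ(ζ) = (ζ₁/ζ₂, ζ₂/ζ₃, …, ζ_{n−1}/ζₙ, ζₙ) (so σ and τ are mutually inverse self-maps of 𝕋ⁿ). Then for every φ ∈ L^∞(𝕋ⁿ): (a) T_{φ,△ₙ} = Ψ⁻¹ ∘ T_{φ∘τ, 𝔻ⁿ} ∘ Ψ (regarding Ψ as a unitary from H²(∂_d△ₙ) onto H²(∂_d𝔻ⁿ)); and (b) T_{φ,𝔻ⁿ} = Ψ ∘ T_{φ∘σ, △ₙ} ∘ Ψ⁻¹. In particular every Toeplitz operator on H²(∂_d△ₙ) is unitarily equivalent to a Toeplitz operator on H²(∂_d𝔻ⁿ) and vice versa. -/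
open MeasureTheory Filter Topology ComplexConjugate

noncomputable section

instance fact_one_pos : Fact ((0:ℝ) < 1) := ⟨one_pos⟩

abbrev Torus (n : ℕ) := Fin n → AddCircle (1 : ℝ)

abbrev L2T (n : ℕ) := Lp ℂ 2 (volume : Measure (Torus n))

abbrev LinfT (n : ℕ) := Lp ℂ ⊤ (volume : Measure (Torus n))

def char {n : ℕ} (α : Fin n → ℤ) : Torus n → ℂ := fun x => ∏ j, fourier (α j) (x j)

lemma char_continuous {n : ℕ} (α : Fin n → ℤ) : Continuous (char α) :=
  continuous_finsetProd _ fun j _ => (fourier (α j)).continuous.comp (continuous_apply j)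

lemma char_memLp {n : ℕ} (α : Fin n → ℤ) (p : ENNReal) :
    MemLp (char α) p (volume : Measure (Torus n)) := by
  refine (memLp_top_of_bound ((char_continuous α).aestronglyMeasurable) 1 ?_).mono_exponent le_top
  filter_upwards with x
  simp only [char, norm_prod]
  calc ∏ j, ‖fourier (α j) (x j)‖
      = ∏ j : Fin n, (1:ℝ) := by
        refine Finset.prod_congr rfl fun j _ => ?_
        rw [fourier_apply]; exact Circle.norm_coe _
    _ ≤ 1 := by simp

def charL2 {n : ℕ} (α : Fin n → ℤ) : L2T n := (char_memLp α 2).toLp (char α)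

def hardyT (n : ℕ) : Submodule ℂ (L2T n) :=
  (Submodule.span ℂ
    (charL2 '' {α : Fin n → ℤ | ∀ k : Fin n, 0 ≤ (∑ j ∈ Finset.Iic k, α j) + (k.val : ℤ)})).topologicalClosure

def hardyD (n : ℕ) : Submodule ℂ (L2T n) :=
  (Submodule.span ℂ (charL2 '' {α : Fin n → ℤ | ∀ j, 0 ≤ α j})).topologicalClosure

instance hardyT.completeSpace (n : ℕ) : CompleteSpace (hardyT n) :=
  (Submodule.isClosed_topologicalClosure _).completeSpace_coe

instance hardyD.completeSpace (n : ℕ) : CompleteSpace (hardyD n) :=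
  (Submodule.isClosed_topologicalClosure _).completeSpace_coe

def IsToeplitzOn {n : ℕ} (K : Submodule ℂ (L2T n)) (φ : Torus n → ℂ) (T : K →L[ℂ] K) : Prop :=
  ∀ f g : K,
    (inner ℂ ((g : L2T n)) ((T f : L2T n)) : ℂ) =
      ∫ x, conj ((g : L2T n) x) * (φ x * (f : L2T n) x) ∂volume

def IsCoordMult {n : ℕ} (j : Fin n) (M : hardyT n →L[ℂ] hardyT n) : Prop :=
  ∀ f : hardyT n,
    ((M f : L2T n) : Torus n → ℂ) =ᵐ[volume]
      fun x => fourier 1 (x j) * ((f : L2T n) : Torus n → ℂ) x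

def IsHankelT {n : ℕ} (φ : Torus n → ℂ) (H : hardyT n →L[ℂ] L2T n) : Prop :=
  (∀ f : hardyT n, H f ∈ (hardyT n)ᗮ) ∧
    ∀ f : hardyT n, ∀ g : L2T n, g ∈ (hardyT n)ᗮ →
      (inner ℂ g (H f) : ℂ) = ∫ x, conj (g x) * (φ x * (f : L2T n) x) ∂volume

def IsAnalyticSymbolF {n : ℕ} (φ : Torus n → ℂ) : Prop :=
  ∀ α : Fin n → ℤ, (¬ ∀ k : Fin n, 0 ≤ ∑ j ∈ Finset.Iic k, α j) →
    ∫ x, φ x * char (-α) x ∂(volume : Measure (Torus n)) = 0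

def IsInnerSymbolF {n : ℕ} (φ : Torus n → ℂ) : Prop :=
  IsAnalyticSymbolF φ ∧ ∀ᵐ x ∂(volume : Measure (Torus n)), ‖φ x‖ = 1

def tauMap {n : ℕ} (x : Torus n) : Torus n := fun j => ∑ k ∈ Finset.Ici j, x k

def sigmaMap {n : ℕ} (x : Torus n) : Torus n :=
  fun j => if h : (j : ℕ) + 1 < n then x j - x ⟨(j : ℕ) + 1, h⟩ else x j

def jacF {n : ℕ} (x : Torus n) : ℂ := ∏ j : Fin n, fourier (j.val : ℤ) (x j)

def jacInvF {n : ℕ} (x : Torus n) : ℂ :=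
  ∏ j : Fin n, fourier (if j.val = 0 then (0 : ℤ) else -1) (x j)


/-!
Ψ sends the character `ζ^α` to `ζ^β` with `β_k = α₁ + ⋯ + α_k + k - 1`, a bijection from the
index set `𝓘` onto `ℤ₊ⁿ`; hence the unitary `Ψ` carries `H²(∂_d△ₙ)` onto `H²(∂_d𝔻ⁿ)`. Since `τ` is a
continuous automorphism of the compact group `𝕋ⁿ` it preserves Haar measure, and `|J| = 1`, so
`⟨Ψh, (φ∘τ) Ψf⟩ = ⟨h, φ f⟩`. Testing both sides of (a) against `H²(∂_d𝔻ⁿ) = Ψ H²(∂_d△ₙ)` gives (a),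
and (b) is (a) for the symbol `φ ∘ σ`, because `σ ∘ τ = id`.
-/

section FourierPoint

variable {T : ℝ}

lemma fourier_apply_add (m : ℤ) (x y : AddCircle T) :
    fourier m (x + y) = fourier m x * fourier m y := by
  simp_rw [fourier_apply, smul_add, AddCircle.toCircle_add, Circle.coe_mul]

lemma fourier_apply_sum {ι : Type*} (m : ℤ) (s : Finset ι) (x : ι → AddCircle T) :
    fourier m (∑ k ∈ s, x k) = ∏ k ∈ s, fourier m (x k) := by
  induction s using Finset.cons_induction with
  | empty => simp
  | cons a s ha ih => rw [Finset.sum_cons, Finset.prod_cons, fourier_apply_add, ih]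

lemma fourier_sum_apply {ι : Type*} (s : Finset ι) (m : ι → ℤ) (x : AddCircle T) :
    fourier (∑ j ∈ s, m j) x = ∏ j ∈ s, fourier (m j) x := by
  induction s using Finset.cons_induction with
  | empty => simp
  | cons a s ha ih => rw [Finset.sum_cons, Finset.prod_cons, fourier_add, ih]

end FourierPoint

section TauSigma

variable {n : ℕ}

lemma tauMap_apply_of_lt (x : Torus n) {j : Fin n} (h : (j : ℕ) + 1 < n) :
    tauMap x j = x j + tauMap x ⟨j + 1, h⟩ := by
  have hIoi : Finset.Ioi j = Finset.Ici ⟨j + 1, h⟩ := by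
    ext k
    simp only [Finset.mem_Ioi, Finset.mem_Ici, Fin.lt_def, Fin.le_def]
    omega
  rw [tauMap, Finset.Ici_eq_cons_Ioi, Finset.sum_cons, hIoi]
  rfl

lemma tauMap_apply_of_not_lt (x : Torus n) {j : Fin n} (h : ¬(j : ℕ) + 1 < n) :
    tauMap x j = x j := by
  have hIci : Finset.Ici j = {j} := by
    ext k
    simp only [Finset.mem_Ici, Finset.mem_singleton, Fin.le_def, Fin.ext_iff]
    omega
  rw [tauMap, hIci, Finset.sum_singleton]

lemma sigmaMap_tauMap (x : Torus n) : sigmaMap (tauMap x) = x := by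
  funext j
  by_cases h : (j : ℕ) + 1 < n
  · rw [sigmaMap, dif_pos h, tauMap_apply_of_lt x h, add_sub_cancel_right]
  · rw [sigmaMap, dif_neg h, tauMap_apply_of_not_lt x h]

lemma tauMap_sigmaMap (x : Torus n) : tauMap (sigmaMap x) = x := by
  funext j
  obtain ⟨m, hm⟩ : ∃ m, n - 1 - (j : ℕ) = m := ⟨_, rfl⟩
  induction m generalizing j with
  | zero =>
    have h : ¬(j : ℕ) + 1 < n := by omega
    rw [tauMap_apply_of_not_lt _ h, sigmaMap, dif_neg h]
  | succ m ih =>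
    have h : (j : ℕ) + 1 < n := by omega
    rw [tauMap_apply_of_lt _ h, ih (j := ⟨j + 1, h⟩) (by simp only; omega), sigmaMap, dif_pos h,
      sub_add_cancel]

lemma tauMap_add (x y : Torus n) : tauMap (x + y) = tauMap x + tauMap y := by
  funext j
  simp only [tauMap, Pi.add_apply, Finset.sum_add_distrib]

lemma continuous_tauMap : Continuous (tauMap (n := n)) :=
  continuous_pi fun _ => continuous_finsetSum _ fun k _ => continuous_apply k

lemma continuous_sigmaMap : Continuous (sigmaMap (n := n)) := by
  refine continuous_pi fun j => ?_
  by_cases h : (j : ℕ) + 1 < n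
  · simp only [sigmaMap, dif_pos h]
    exact (continuous_apply j).sub (continuous_apply _)
  · simp only [sigmaMap, dif_neg h]
    exact continuous_apply j

def tauContinuousAddEquiv : Torus n ≃ₜ+ Torus n where
  toFun := tauMap
  invFun := sigmaMap
  left_inv := sigmaMap_tauMap
  right_inv := tauMap_sigmaMap
  map_add' := tauMap_add
  continuous_toFun := continuous_tauMap
  continuous_invFun := continuous_sigmaMap

lemma measurePreserving_tauMap : MeasurePreserving (tauMap (n := n)) volume volume :=
  AddMonoidHom.measurePreserving (f := (tauContinuousAddEquiv (n := n)).toAddEquiv.toAddMonoidHom)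
    continuous_tauMap tauContinuousAddEquiv.surjective rfl

lemma integral_comp_tauMap (g : Torus n → ℂ) : ∫ x, g (tauMap x) = ∫ x, g x :=
  measurePreserving_tauMap.integral_comp tauContinuousAddEquiv.toHomeomorph.measurableEmbedding g

end TauSigma

section Indices

variable {n : ℕ}

def toPolydiscIndex (α : Fin n → ℤ) : Fin n → ℤ := fun k => ∑ j ∈ Finset.Iic k, α j + k

def ofPolydiscIndex (β : Fin n → ℤ) : Fin n → ℤ :=
  fun k => if h : (k : ℕ) = 0 then β k else β k - β ⟨k - 1, by omega⟩ - 1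

lemma sum_Iic_ofPolydiscIndex (β : Fin n → ℤ) (k : Fin n) :
    ∑ j ∈ Finset.Iic k, ofPolydiscIndex β j = β k - k := by
  obtain ⟨m, hm⟩ : ∃ m, (k : ℕ) = m := ⟨_, rfl⟩
  induction m generalizing k with
  | zero =>
    have hIic : Finset.Iic k = {k} := by
      ext j
      simp only [Finset.mem_Iic, Finset.mem_singleton, Fin.le_def, Fin.ext_iff]
      omega
    simp [hIic, ofPolydiscIndex, hm]
  | succ m ih =>
    have hIic : Finset.Iic k = insert k (Finset.Iic ⟨k - 1, by omega⟩) := by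
      ext j
      simp only [Finset.mem_Iic, Finset.mem_insert, Fin.le_def, Fin.ext_iff]
      omega
    rw [hIic, Finset.sum_insert (by simp [Fin.le_def]; omega), ih ⟨k - 1, by omega⟩ (by simp only; omega),
      ofPolydiscIndex, dif_neg (by omega)]
    push_cast [Nat.cast_sub (show 1 ≤ (k : ℕ) by omega)]
    ring

lemma toPolydiscIndex_ofPolydiscIndex (β : Fin n → ℤ) :
    toPolydiscIndex (ofPolydiscIndex β) = β := by
  funext k
  rw [toPolydiscIndex, sum_Iic_ofPolydiscIndex, sub_add_cancel]

lemma jacF_mul_char_tauMap (α : Fin n → ℤ) (x : Torus n) :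
    jacF x * char α (tauMap x) = char (toPolydiscIndex α) x := by
  have hchar : char α (tauMap x) = ∏ k : Fin n, fourier (∑ j ∈ Finset.Iic k, α j) (x k) :=
    calc ∏ j : Fin n, fourier (α j) (∑ k ∈ Finset.Ici j, x k)
        = ∏ j : Fin n, ∏ k ∈ Finset.Ici j, fourier (α j) (x k) := by
          simp only [fourier_apply_sum]
      _ = ∏ k : Fin n, ∏ j ∈ Finset.Iic k, fourier (α j) (x k) :=
          Finset.prod_comm' fun j k => by simp only [Finset.mem_univ, Finset.mem_Ici,
            Finset.mem_Iic, true_and, and_true]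
      _ = ∏ k : Fin n, fourier (∑ j ∈ Finset.Iic k, α j) (x k) := by
          simp only [fourier_sum_apply]
  rw [hchar, jacF, ← Finset.prod_mul_distrib]
  refine Finset.prod_congr rfl fun k _ => ?_
  rw [toPolydiscIndex, add_comm _ (k : ℤ), fourier_add]

lemma norm_jacF (x : Torus n) : ‖jacF x‖ = 1 := by
  simp only [jacF, norm_prod, fourier_apply, Circle.norm_coe, Finset.prod_const_one]

end Indices

lemma Submodule.mapsTo_topologicalClosure_span {R E F : Type*} [Semiring R] [TopologicalSpace R]
    [AddCommMonoid E] [Module R E] [TopologicalSpace E] [ContinuousSMul R E] [ContinuousAdd E]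
    [AddCommMonoid F] [Module R F] [TopologicalSpace F] [ContinuousSMul R F] [ContinuousAdd F]
    (f : E →L[R] F) {s : Set E} {t : Set F} (h : Set.MapsTo f s t) :
    Set.MapsTo f (span R s).topologicalClosure (span R t).topologicalClosure := fun x hx =>
  have hmap := (span R s).topologicalClosure_map f ⟨x, hx, rfl⟩
  topologicalClosure_mono (by rw [map_span]; exact span_mono h.image_subset) hmap

section Psi

variable {n : ℕ} (Ψ : L2T n ≃ₗᵢ[ℂ] L2T n)
    (hΨ : ∀ f : L2T n, (⇑(Ψ f) : Torus n → ℂ) =ᵐ[volume] fun x => jacF x * f (tauMap x))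
include hΨ

lemma psi_charL2 (α : Fin n → ℤ) : Ψ (charL2 α) = charL2 (toPolydiscIndex α) := by
  refine Lp.ext ((hΨ _).trans ?_)
  have hcomp : (fun x => charL2 α (tauMap x)) =ᵐ[volume] fun x => char α (tauMap x) :=
    measurePreserving_tauMap.quasiMeasurePreserving.ae_eq (MemLp.coeFn_toLp _)
  filter_upwards [hcomp, MemLp.coeFn_toLp (char_memLp (toPolydiscIndex α) 2)] with x hx hβ
  rw [hx, jacF_mul_char_tauMap, charL2, hβ]

lemma psi_symm_charL2 (β : Fin n → ℤ) : Ψ.symm (charL2 β) = charL2 (ofPolydiscIndex β) := by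
  rw [Ψ.symm_apply_eq, psi_charL2 Ψ hΨ, toPolydiscIndex_ofPolydiscIndex]

lemma mapsTo_psi_hardyT : Set.MapsTo Ψ (hardyT n) (hardyD n) := by
  refine Submodule.mapsTo_topologicalClosure_span Ψ.toContinuousLinearEquiv.toContinuousLinearMap ?_
  rintro _ ⟨α, hα, rfl⟩
  exact ⟨toPolydiscIndex α, hα, (psi_charL2 Ψ hΨ α).symm⟩

lemma mapsTo_psi_symm_hardyD : Set.MapsTo Ψ.symm (hardyD n) (hardyT n) := by
  refine Submodule.mapsTo_topologicalClosure_span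
    Ψ.symm.toContinuousLinearEquiv.toContinuousLinearMap ?_
  rintro _ ⟨β, hβ, rfl⟩
  refine ⟨ofPolydiscIndex β, fun k => ?_, (psi_symm_charL2 Ψ hΨ β).symm⟩
  rw [sum_Iic_ofPolydiscIndex, sub_add_cancel]
  exact hβ k

lemma integral_conj_psi_mul_psi (ψ : Torus n → ℂ) (h f : L2T n) :
    ∫ x, conj (Ψ h x) * (ψ (tauMap x) * Ψ f x) = ∫ x, conj (h x) * (ψ x * f x) := by
  rw [← integral_comp_tauMap fun y => conj (h y) * (ψ y * f y)]
  refine integral_congr_ae ?_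
  filter_upwards [hΨ h, hΨ f] with x hh hf
  rw [hh, hf, map_mul]
  calc conj (jacF x) * conj (h (tauMap x)) * (ψ (tauMap x) * (jacF x * f (tauMap x)))
      = (conj (jacF x) * jacF x) * (conj (h (tauMap x)) * (ψ (tauMap x) * f (tauMap x))) := by
        ring
    _ = conj (h (tauMap x)) * (ψ (tauMap x) * f (tauMap x)) := by
        rw [Complex.conj_mul', norm_jacF, Complex.ofReal_one, one_pow, one_mul]

lemma psi_toeplitz_eq (ψ : Torus n → ℂ)
    (A : hardyT n →L[ℂ] hardyT n) (hA : IsToeplitzOn (hardyT n) ψ A)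
    (B : hardyD n →L[ℂ] hardyD n) (hB : IsToeplitzOn (hardyD n) (fun x => ψ (tauMap x)) B)
    (f : hardyT n) (g : hardyD n) (hg : (g : L2T n) = Ψ f) :
    Ψ (A f) = B g := by
  have hAf : Ψ (A f) ∈ hardyD n := mapsTo_psi_hardyT Ψ hΨ (A f).2
  suffices (⟨Ψ (A f), hAf⟩ : hardyD n) = B g from congrArg Subtype.val this
  refine ext_inner_left ℂ fun w => ?_
  have hw : Ψ.symm w ∈ hardyT n := mapsTo_psi_symm_hardyD Ψ hΨ w.2
  calc inner ℂ w ⟨Ψ (A f), hAf⟩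
      = inner ℂ (Ψ (Ψ.symm w)) (Ψ (A f)) := by rw [Ψ.apply_symm_apply]; rfl
    _ = ∫ x, conj (Ψ.symm w x) * (ψ x * (f : L2T n) x) := (Ψ.inner_map_map _ _).trans (hA f ⟨_, hw⟩)
    _ = ∫ x, conj ((w : L2T n) x) * (ψ (tauMap x) * (g : L2T n) x) := by
        rw [← integral_conj_psi_mul_psi Ψ hΨ, Ψ.apply_symm_apply, hg]
    _ = inner ℂ w (B g) := (hB g w).symm

end Psi

theorem stmt9_general {n : ℕ} (Ψ : L2T n ≃ₗᵢ[ℂ] L2T n)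
    (hΨ : ∀ f : L2T n, (⇑(Ψ f) : Torus n → ℂ) =ᵐ[volume] fun x => jacF x * f (tauMap x))
    (φ : LinfT n)
    (Tt : hardyT n →L[ℂ] hardyT n) (hTt : IsToeplitzOn (hardyT n) (⇑φ) Tt)
    (Td : hardyD n →L[ℂ] hardyD n) (hTd : IsToeplitzOn (hardyD n) (fun x => φ (tauMap x)) Td)
    (Tt' : hardyT n →L[ℂ] hardyT n) (hTt' : IsToeplitzOn (hardyT n) (fun x => φ (sigmaMap x)) Tt')
    (Td' : hardyD n →L[ℂ] hardyD n) (hTd' : IsToeplitzOn (hardyD n) (⇑φ) Td') :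
    (∀ (f : hardyT n) (g : hardyD n), (g : L2T n) = Ψ f →
        Ψ ((Tt f : L2T n)) = ((Td g : L2T n))) ∧
    (∀ (f : hardyD n) (g : hardyT n), (g : L2T n) = Ψ.symm f →
        Ψ.symm ((Td' f : L2T n)) = ((Tt' g : L2T n))) := by
  refine ⟨psi_toeplitz_eq Ψ hΨ φ Tt hTt Td hTd, fun f g hg => ?_⟩
  have hTd'σ : IsToeplitzOn (hardyD n) (fun x => φ (sigmaMap (tauMap x))) Td' := by
    simpa only [sigmaMap_tauMap] using hTd'
  rw [Ψ.symm_apply_eq]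
  exact (psi_toeplitz_eq Ψ hΨ _ Tt' hTt' Td' hTd'σ g f (by rw [hg, Ψ.apply_symm_apply])).symm

/-- Main theorem: `T_{φ,△ₙ} = Ψ⁻¹ T_{φ∘τ,𝔻ⁿ} Ψ` and `T_{φ,𝔻ⁿ} = Ψ T_{φ∘σ,△ₙ} Ψ⁻¹`. -/
theorem stmt9 {n : ℕ} (hn : 2 ≤ n) (Ψ : L2T n ≃ₗᵢ[ℂ] L2T n)
    (hΨ : ∀ f : L2T n, (⇑(Ψ f) : Torus n → ℂ) =ᵐ[volume] fun x => jacF x * f (tauMap x))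
    (φ : LinfT n)
    (Tt : hardyT n →L[ℂ] hardyT n) (hTt : IsToeplitzOn (hardyT n) (⇑φ) Tt)
    (Td : hardyD n →L[ℂ] hardyD n) (hTd : IsToeplitzOn (hardyD n) (fun x => φ (tauMap x)) Td)
    (Tt' : hardyT n →L[ℂ] hardyT n) (hTt' : IsToeplitzOn (hardyT n) (fun x => φ (sigmaMap x)) Tt')
    (Td' : hardyD n →L[ℂ] hardyD n) (hTd' : IsToeplitzOn (hardyD n) (⇑φ) Td') :
    (∀ (f : hardyT n) (g : hardyD n), (g : L2T n) = Ψ f →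
        Ψ ((Tt f : L2T n)) = ((Td g : L2T n))) ∧
    (∀ (f : hardyD n) (g : hardyT n), (g : L2T n) = Ψ.symm f →
        Ψ.symm ((Td' f : L2T n)) = ((Tt' g : L2T n))) :=
  stmt9_general Ψ hΨ φ Tt hTt Td hTd Tt' hTt' Td' hTd'
end
end

section
/- Let φ ∈ L^∞(𝕋ⁿ). If the Toeplitz operator T_{φ,△ₙ} is compact on H²(∂_d△ₙ), then φ = 0 almost everywhere (so T_{φ,△ₙ} = 0). In other words, the only compact Toeplitz operator on H²(∂_d△ₙ) is the zero operator. -/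
/-!
For `α, β ∈ 𝓘` the Toeplitz matrix entry `⟪ζ^β, T ζ^α⟫ = ∫ φ ζ^(α - β)` depends only on
`α - β`. Given `γ`, put `β_k = (k + |γ_j|)_j`: then `β_k` and `β_k + γ` have nonnegative
entries, so `ζ^(β_k)` and `ζ^(β_k + γ)` are orthonormal sequences in `H²(∂_d△ₙ)` whose
matrix entries are all `∫ φ ζ^γ`. Compactness of `T` makes `T ζ^(β_k + γ)` converge along a
subsequence, while `ζ^(β_k)` tends weakly to zero by Bessel's inequality, so `∫ φ ζ^γ = 0`.
All Fourier coefficients of `φ` vanish, hence `φ = 0`, and then `⟪g, T f⟫ = ∫ ḡ φ f = 0`.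
-/

open MeasureTheory Filter Topology ComplexConjugate

noncomputable section

open UnitAddTorus

theorem Orthonormal.tendsto_inner_cofinite_zero {𝕜 E ι : Type*} [RCLike 𝕜]
    [NormedAddCommGroup E] [InnerProductSpace 𝕜 E] {v : ι → E} (hv : Orthonormal 𝕜 v) (x : E) :
    Tendsto (fun i => inner 𝕜 (v i) x) cofinite (𝓝 0) := by
  have hsq := (hv.inner_products_summable x).tendsto_cofinite_zero.sqrt
  simp only [Real.sqrt_sq (norm_nonneg _), Real.sqrt_zero] at hsq
  exact tendsto_zero_iff_norm_tendsto_zero.mpr hsq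

theorem IsCompactOperator.eq_zero_of_inner_orthonormal_eq {𝕜 E F : Type*} [RCLike 𝕜]
    [NormedAddCommGroup E] [NormedSpace 𝕜 E] [NormedAddCommGroup F] [InnerProductSpace 𝕜 F]
    {T : E →L[𝕜] F} (hT : IsCompactOperator T) {u : ℕ → E} (hu : Bornology.IsBounded (Set.range u))
    {v : ℕ → F} (hv : Orthonormal 𝕜 v) {c : 𝕜} (huv : ∀ k, inner 𝕜 (v k) (T (u k)) = c) :
    c = 0 := by
  obtain ⟨w, -, ψ, hψ, hTuw⟩ := (hT.isCompact_closure_image_of_bounded (f := (T : E →ₗ[𝕜] F))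
    hu).tendsto_subseq fun k => subset_closure (Set.mem_image_of_mem T (Set.mem_range_self k))
  have hnear : Tendsto (fun j => inner 𝕜 (v (ψ j)) (T (u (ψ j)) - w)) atTop (𝓝 0) := by
    refine squeeze_zero_norm (fun j => ?_) (tendsto_iff_norm_sub_tendsto_zero.mp hTuw)
    simpa [hv.1] using norm_inner_le_norm (𝕜 := 𝕜) (v (ψ j)) (T (u (ψ j)) - w)
  have hfar : Tendsto (fun j => inner 𝕜 (v (ψ j)) w) atTop (𝓝 0) := by
    simpa [Nat.cofinite_eq_atTop] using
      (hv.comp ψ hψ.injective).tendsto_inner_cofinite_zero w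
  have hsum := hnear.add hfar
  simp only [← inner_add_right, sub_add_cancel, huv, add_zero] at hsum
  exact tendsto_nhds_unique tendsto_const_nhds hsum

-- Mathlib's Fourier basis of `UnitAddTorus` is built on `haarAddCircle`, not on `volume`.
lemma volume_torus_eq_pi_haarAddCircle (n : ℕ) :
    (volume : Measure (Torus n)) = Measure.pi fun _ => AddCircle.haarAddCircle := by
  rw [volume_pi, AddCircle.volume_eq_smul_haarAddCircle, ENNReal.ofReal_one, one_smul]

lemma char_add {n : ℕ} (α β : Fin n → ℤ) (x : Torus n) :
    char (α + β) x = char α x * char β x :=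
  mFourier_add (d := Fin n) (m := α) (n := β) (x := x)

lemma char_neg {n : ℕ} (α : Fin n → ℤ) (x : Torus n) : char (-α) x = conj (char α x) :=
  mFourier_neg (d := Fin n) (n := α) (x := x)

lemma coeFn_charL2 {n : ℕ} (α : Fin n → ℤ) : charL2 α =ᵐ[volume] char α :=
  (char_memLp α 2).coeFn_toLp

lemma inner_charL2 {n : ℕ} (α β : Fin n → ℤ) :
    inner ℂ (charL2 α) (charL2 β) = ∫ x, conj (char α x) * char β x := by
  rw [L2.inner_def]
  refine integral_congr_ae ?_
  filter_upwards [coeFn_charL2 α, coeFn_charL2 β] with x hα hβ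
  rw [hα, hβ, RCLike.inner_apply']

lemma orthonormal_charL2 (n : ℕ) : Orthonormal ℂ (charL2 (n := n)) := by
  refine orthonormal_iff_ite.mpr fun α β => ?_
  rw [← orthonormal_iff_ite.mp (orthonormal_mFourier (d := Fin n)) α β,
    ContinuousMap.inner_toLp, inner_charL2, volume_torus_eq_pi_haarAddCircle]
  exact integral_congr_ae (ae_of_all _ fun x => mul_comm _ _)

lemma ae_eq_zero_of_integral_mul_char_eq_zero {n : ℕ} {f : Torus n → ℂ}
    (hf : MemLp f 2 volume) (hcoeff : ∀ γ, ∫ x, f x * char γ x = 0) : f =ᵐ[volume] 0 := by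
  rw [volume_torus_eq_pi_haarAddCircle] at hf hcoeff ⊢
  have hrepr : mFourierBasis.repr (hf.toLp f) = 0 := by
    ext γ
    rw [mFourierBasis_repr, mFourierCoeff, lp.coeFn_zero, Pi.zero_apply, ← hcoeff (-γ)]
    refine integral_congr_ae ?_
    filter_upwards [hf.coeFn_toLp] with x hx
    rw [hx, smul_eq_mul, mul_comm]
    rfl
  have hzero : hf.toLp f = 0 := mFourierBasis.repr.map_eq_zero_iff.mp hrepr
  exact hf.coeFn_toLp.symm.trans (hzero ▸ Lp.coeFn_zero _ _ _)

lemma charL2_mem_hardyD {n : ℕ} {α : Fin n → ℤ} (hα : ∀ j, 0 ≤ α j) : charL2 α ∈ hardyD n :=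
  Submodule.le_topologicalClosure _ (Submodule.subset_span ⟨α, hα, rfl⟩)

lemma hardyD_le_hardyT (n : ℕ) : hardyD n ≤ hardyT n := by
  refine Submodule.topologicalClosure_mono (Submodule.span_mono (Set.image_mono ?_))
  exact fun α hα k => add_nonneg (Finset.sum_nonneg fun j _ => hα j) (Int.natCast_nonneg _)

namespace IsToeplitzOn

variable {n : ℕ} {K : Submodule ℂ (L2T n)} {φ : Torus n → ℂ} {T : K →L[ℂ] K}

lemma inner_charL2 (hT : IsToeplitzOn K φ T) {α β : Fin n → ℤ} (hα : charL2 α ∈ K)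
    (hβ : charL2 β ∈ K) :
    inner ℂ (⟨charL2 β, hβ⟩ : K) (T ⟨charL2 α, hα⟩) = ∫ x, φ x * char (α - β) x := by
  rw [Submodule.coe_inner, hT]
  refine integral_congr_ae ?_
  filter_upwards [coeFn_charL2 α, coeFn_charL2 β] with x hα hβ
  rw [hα, hβ, sub_eq_neg_add, char_add, char_neg]
  ring

lemma eq_zero_of_ae_eq_zero (hT : IsToeplitzOn K φ T) (hφ : φ =ᵐ[volume] 0) : T = 0 := by
  ext1 f
  refine (inner_self_eq_zero (𝕜 := ℂ)).mp ?_
  rw [Submodule.coe_inner, hT, integral_eq_zero_of_ae]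
  filter_upwards [hφ] with x hx
  simp [hx]

lemma integral_mul_char_eq_zero [NeZero n] (hK : hardyD n ≤ K) (hT : IsToeplitzOn K φ T)
    (hcpt : IsCompactOperator T) (γ : Fin n → ℤ) : ∫ x, φ x * char γ x = 0 := by
  let β : ℕ → Fin n → ℤ := fun k j => k + |γ j|
  have hβ : ∀ k, charL2 (β k) ∈ K := fun k =>
    hK (charL2_mem_hardyD fun j => by positivity)
  have hβγ : ∀ k, charL2 (β k + γ) ∈ K := fun k =>
    hK (charL2_mem_hardyD fun j => by
      simp only [Pi.add_apply, β]
      linarith [neg_abs_le (γ j), Int.natCast_nonneg k])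
  have hβ_inj : Function.Injective β := fun k l hkl => by simpa [β] using congrFun hkl 0
  refine hcpt.eq_zero_of_inner_orthonormal_eq (u := fun k => ⟨_, hβγ k⟩) ?_
    ((orthonormal_charL2 n |>.comp β hβ_inj).codRestrict K hβ) fun k => ?_
  · refine (Metric.isBounded_closedBall (x := (0 : K)) (r := 1)).subset ?_
    rintro - ⟨k, rfl⟩
    simp [Submodule.coe_norm, (orthonormal_charL2 n).1]
  · exact (hT.inner_charL2 (hβγ k) (hβ k)).trans (by rw [add_sub_cancel_left])

end IsToeplitzOn

/-- The only compact Toeplitz operator on `H²(∂_d△ₙ)` is the zero operator. -/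
theorem stmt14 {n : ℕ} (hn : 2 ≤ n) (φ : LinfT n)
    (T : hardyT n →L[ℂ] hardyT n) (hT : IsToeplitzOn (hardyT n) (⇑φ) T)
    (hcpt : IsCompactOperator T) : φ = 0 ∧ T = 0 := by
  have : NeZero n := ⟨by omega⟩
  have hφ : ⇑φ =ᵐ[volume] 0 := ae_eq_zero_of_integral_mul_char_eq_zero
    ((Lp.memLp φ).mono_exponent le_top) (hT.integral_mul_char_eq_zero (hardyD_le_hardyT n) hcpt)
  exact ⟨Lp.ext (hφ.trans (Lp.coeFn_zero _ _ _).symm), hT.eq_zero_of_ae_eq_zero hφ⟩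
end
end
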